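/- arXiv:1205.2414 — 2 statements merged into one kernel-verified Lean document; each statement's English description precedes it below -/
import Mathlib

section
/- For every odd prime q and integers a, b, the Salié sum K₂(a,b,q) = ∑_{k=1,...,q-1, gcd(k,q)=1} (k/q) e((ka + k*b)/q) (where (k/q) is the Legendre symbol, k* is the inverse of k mod q, and e(z) = exp(2πiz)) satisfies |K₂(a,b,q)| ≤ 2√q. -/
noncomputable def e (z : ℝ) : ℂ := Complex.exp (2 * Real.pi * Complex.I * z)

namespace Salie

open Finset

variable (q : ℕ) [Fact q.Prime]

noncomputable def χ : MulChar (ZMod q) ℂ :=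
  (quadraticChar (ZMod q)).ringHomComp (Int.castRingHom ℂ)

noncomputable def ψ : AddChar (ZMod q) ℂ := ZMod.stdAddChar

lemma χ_apply (x : ZMod q) : χ q x = ((quadraticChar (ZMod q) x : ℤ) : ℂ) := rfl

lemma χ_quad : (χ q).IsQuadratic := (quadraticChar_isQuadratic (ZMod q)).comp _

variable {q}

lemma ringChar_ne_two (hodd : Odd q) : ringChar (ZMod q) ≠ 2 := by
  rw [ZMod.ringChar_zmod_n]
  rintro rfl
  exact (by decide : ¬ Odd 2) hodd

lemma two_ne_zero'' (hodd : Odd q) : (2 : ZMod q) ≠ 0 := by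
  have h : (2 : ZMod q) = ((2 : ℕ) : ZMod q) := by norm_cast
  rw [h, Ne, ZMod.natCast_eq_zero_iff]
  intro hdvd
  have := (Nat.prime_dvd_prime_iff_eq Fact.out Nat.prime_two).mp hdvd
  subst this
  exact (by decide : ¬ Odd 2) hodd

lemma χ_ne_one (hodd : Odd q) : χ q ≠ 1 :=
  (MulChar.ringHomComp_ne_one_iff (fun a b h => by simpa using h)).mpr
    (quadraticChar_ne_one (ringChar_ne_two hodd))

lemma χ_zero : χ q 0 = 0 := by simp [χ_apply]

lemma χ_sq {x : ZMod q} (hx : x ≠ 0) : χ q x * χ q x = 1 := by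
  rw [χ_apply, ← Int.cast_mul, ← sq, quadraticChar_sq_one hx, Int.cast_one]

lemma χ_inv (x : ZMod q) : χ q x⁻¹ = χ q x := by
  rcases eq_or_ne x 0 with rfl | hx
  · rw [inv_zero]
  · have h1 : χ q x * χ q x⁻¹ = 1 := by
      rw [← map_mul, mul_inv_cancel₀ hx, map_one]
    calc χ q x⁻¹ = (χ q x * χ q x) * χ q x⁻¹ := by rw [χ_sq hx, one_mul]
    _ = χ q x * (χ q x * χ q x⁻¹) := by ring
    _ = χ q x := by rw [h1, mul_one]

lemma χ_abs {x : ZMod q} (hx : x ≠ 0) : ‖χ q x‖ = 1 := by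
  have h := congrArg (‖·‖) (χ_sq hx)
  simp only [norm_mul, norm_one] at h
  rcases mul_self_eq_one_iff.mp h with h' | h'
  · exact h'
  · exfalso; nlinarith [norm_nonneg (χ q x)]

lemma ψ_abs (x : ZMod q) : ‖ψ q x‖ = 1 := by
  rw [ψ, ZMod.stdAddChar_apply]
  exact Circle.norm_coe _

lemma abs_gauss (hodd : Odd q) :
    ‖gaussSum (χ q) (ψ q)‖ = Real.sqrt q := by
  have h : gaussSum (χ q) (ψ q) ^ 2 = χ q (-1) * (Fintype.card (ZMod q) : ℂ) :=
    gaussSum_sq (χ_ne_one hodd) (χ_quad q) (ZMod.isPrimitive_stdAddChar q)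
  have h1 : ‖χ q (-1)‖ = 1 := χ_abs (neg_ne_zero.mpr one_ne_zero)
  have h2 : ‖gaussSum (χ q) (ψ q)‖ ^ 2 = q := by
    rw [← norm_pow, h, norm_mul, h1, one_mul, ZMod.card, Complex.norm_natCast]
  rw [← h2, Real.sqrt_sq (norm_nonneg _)]


variable (q) in
noncomputable def S (a b : ZMod q) : ℂ :=
  ∑ x : ZMod q, χ q x * ψ q (a * x + b * x⁻¹)

lemma S_swap (a b : ZMod q) : S q a b = S q b a := by
  unfold S
  rw [← Equiv.sum_comp (Equiv.inv (ZMod q))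
    (fun x => χ q x * ψ q (a * x + b * x⁻¹))]
  refine Finset.sum_congr rfl fun x _ => ?_
  simp only [Equiv.inv_apply]
  rw [χ_inv, inv_inv, add_comm]

lemma S_reduce {a : ZMod q} (ha : a ≠ 0) (b : ZMod q) :
    S q a b = χ q a * S q 1 (a * b) := by
  unfold S
  rw [← Equiv.sum_comp (Equiv.mulLeft₀ a⁻¹ (inv_ne_zero ha))
    (fun x => χ q x * ψ q (a * x + b * x⁻¹)), Finset.mul_sum]
  refine Finset.sum_congr rfl fun x _ => ?_
  simp only [Equiv.mulLeft₀_apply]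
  rw [map_mul, χ_inv, mul_inv_rev, inv_inv, one_mul]
  have h1 : a * (a⁻¹ * x) = x := by
    field_simp
  have h2 : b * (x⁻¹ * a) = a * b * x⁻¹ := by ring
  rw [h1, h2]
  ring

lemma S_zero_zero (hodd : Odd q) : S q 0 0 = 0 := by
  unfold S
  simp only [zero_mul, add_zero, AddChar.map_zero_eq_one, mul_one]
  have : ∑ x : ZMod q, χ q x = ((∑ x : ZMod q, quadraticChar (ZMod q) x : ℤ) : ℂ) := by
    push_cast [χ_apply]
    rfl
  rw [this, quadraticChar_sum_zero (ringChar_ne_two hodd), Int.cast_zero]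


lemma S_one_zero : S q 1 0 = gaussSum (χ q) (ψ q) := by
  unfold S gaussSum
  refine Finset.sum_congr rfl fun x _ => ?_
  rw [one_mul, zero_mul, add_zero]

lemma S_one_self {c : ZMod q} (hc : c ≠ 0) : S q 1 c = χ q c * S q 1 c := by
  conv_lhs => rw [S_swap, S_reduce hc, mul_one]

lemma S_one_square (hodd : Odd q) {d : ZMod q} (hd : d ≠ 0) :
    S q 1 (d * d) = (ψ q (2 * d) + ψ q (-(2 * d))) * gaussSum (χ q) (ψ q) := by
  classical
  have h2 : (2 : ZMod q) ≠ 0 := two_ne_zero'' hodd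
  set g := gaussSum (χ q) (ψ q) with hg
  set F : ZMod q → ℂ := fun v => χ q v * ψ q v with hF
  set G : ZMod q → ℂ := fun x => χ q x * ψ q (1 * x + d * d * x⁻¹) with hG
  set vv : ZMod q → ZMod q := fun x => x⁻¹ * (x + d) ^ 2 with hvv
  have hGx : ∀ x, G x = χ q x * ψ q (1 * x + d * d * x⁻¹) := fun _ => rfl
  have hFx : ∀ v, F v = χ q v * ψ q v := fun _ => rfl
  have hvvx : ∀ x, vv x = x⁻¹ * (x + d) ^ 2 := fun _ => rfl
  have hdneg : (-d : ZMod q) ≠ 0 := neg_ne_zero.mpr hd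
  have h0d : (0 : ZMod q) ≠ -d := fun h => hdneg h.symm
  have hF0 : F 0 = 0 := by rw [hFx, χ_zero, zero_mul]
  -- split the sum
  have hsplit : S q 1 (d * d)
      = ∑ x ∈ univ \ ({0, -d} : Finset (ZMod q)), G x
        + ∑ x ∈ ({0, -d} : Finset (ZMod q)), G x :=
    (Finset.sum_sdiff (subset_univ _)).symm
  have hpair : ∑ x ∈ ({0, -d} : Finset (ZMod q)), G x = χ q (-d) * ψ q (-(2 * d)) := by
    rw [Finset.sum_pair h0d]
    have hG0 : G 0 = 0 := by rw [hGx, χ_zero, zero_mul]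
    have harg : 1 * (-d) + d * d * (-d)⁻¹ = -(2 * d) := by
      field_simp
      ring
    rw [hG0, zero_add, hGx, harg]
  have hstepA : ∀ x ∈ univ \ ({0, -d} : Finset (ZMod q)),
      G x = ψ q (-(2 * d)) * F (vv x) := by
    intro x hx
    rw [mem_sdiff, mem_insert, mem_singleton] at hx
    obtain ⟨-, hx'⟩ := hx
    push_neg at hx'
    obtain ⟨hx0, hxd⟩ := hx'
    have hxd' : x + d ≠ 0 := fun h => hxd (eq_neg_of_add_eq_zero_left h)
    have harg : 1 * x + d * d * x⁻¹ = vv x + -(2 * d) := by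
      rw [hvvx]
      field_simp
      ring
    have hχ : χ q x = χ q (vv x) := by
      rw [hvvx, map_mul, map_pow, χ_inv, sq, χ_sq hxd', mul_one]
    rw [hGx, hFx, harg, AddChar.map_add_eq_mul, hχ]
    ring
  have hfib : ∑ x ∈ univ \ ({0, -d} : Finset (ZMod q)), F (vv x)
      = ∑ v : ZMod q,
          (((univ \ ({0, -d} : Finset (ZMod q))).filter fun x => vv x = v).card : ℂ) * F v := by
    rw [← Finset.sum_fiberwise_of_maps_to (fun x _ => mem_univ (vv x)) (fun x => F (vv x))]
    refine Finset.sum_congr rfl fun v _ => ?_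
    rw [Finset.sum_congr rfl (fun x hx => by rw [(mem_filter.mp hx).2] :
        ∀ x ∈ (univ \ ({0, -d} : Finset (ZMod q))).filter fun x => vv x = v,
          F (vv x) = F v),
      Finset.sum_const, nsmul_eq_mul]
  have hcount : ∀ v : ZMod q, v ≠ 0 →
      ((((univ \ ({0, -d} : Finset (ZMod q))).filter fun x => vv x = v).card : ℂ))
        = 1 + χ q (v * (v - 4 * d)) := by
    intro v hv
    set t : ZMod q := (2 * d - v) * 2⁻¹ with ht
    set w : ZMod q := t ^ 2 - d ^ 2 with hw
    have h2t : 2 * t = 2 * d - v := by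
      rw [ht]
      field_simp
    have hseteq : (univ \ ({0, -d} : Finset (ZMod q))).filter (fun x => vv x = v)
        = univ.filter fun x => (x + d) ^ 2 = v * x := by
      ext x
      simp only [mem_filter, mem_sdiff, mem_univ, true_and, mem_insert, mem_singleton, hvv]
      constructor
      · rintro ⟨hx', hveq⟩
        push_neg at hx'
        obtain ⟨hx0, -⟩ := hx'
        rw [← hveq]
        field_simp
      · intro heq
        have hx0 : x ≠ 0 := by
          rintro rfl
          rw [mul_zero, zero_add] at heq
          exact hd (sq_eq_zero_iff.mp heq)
        have hxd : x ≠ -d := by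
          rintro rfl
          rw [neg_add_cancel] at heq
          have h0 : v * -d = 0 := by rw [← heq]; ring
          rcases mul_eq_zero.mp h0 with h | h
          · exact hv h
          · exact hdneg h
        refine ⟨fun hor => hor.elim hx0 hxd, ?_⟩
        rw [heq]
        field_simp
    have hshift : (univ.filter fun x : ZMod q => (x + d) ^ 2 = v * x)
        = univ.filter fun x : ZMod q => (x + t) ^ 2 = w := by
      ext x
      simp only [mem_filter, mem_univ, true_and]
      constructor
      · intro h
        have := sub_eq_zero.mpr h
        rw [← sub_eq_zero]
        rw [hw]
        linear_combination this + x * h2t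
      · intro h
        have := sub_eq_zero.mpr h
        rw [← sub_eq_zero]
        rw [hw] at this
        linear_combination this - x * h2t
    have hcard2 : (univ.filter fun x : ZMod q => (x + t) ^ 2 = w).card
        = (univ.filter fun y : ZMod q => y ^ 2 = w).card := by
      apply Finset.card_equiv (Equiv.addRight t)
      intro x
      simp only [mem_filter, mem_univ, true_and, Equiv.coe_addRight]
    have hsqcard : ((univ.filter fun y : ZMod q => y ^ 2 = w).card : ℤ)
        = quadraticChar (ZMod q) w + 1 := by
      rw [← Set.toFinset_setOf]
      exact_mod_cast quadraticChar_card_sqrts (ringChar_ne_two hodd) w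
    have hwchar : quadraticChar (ZMod q) w = quadraticChar (ZMod q) (v * (v - 4 * d)) := by
      have hweq : w = (v * (v - 4 * d)) * (2⁻¹ * 2⁻¹) := by
        rw [hw, ht]
        field_simp
        ring
      rw [hweq, map_mul, ← sq, quadraticChar_sq_one' (inv_ne_zero h2), mul_one]
    rw [hseteq, hshift, hcard2, χ_apply]
    rw [hwchar] at hsqcard
    have h' : (((univ.filter fun y : ZMod q => y ^ 2 = w).card : ℕ) : ℂ)
        = ((quadraticChar (ZMod q) (v * (v - 4 * d)) : ℤ) : ℂ) + 1 := by
      exact_mod_cast hsqcard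
    rw [h']
    ring
  have hC : ∀ v : ZMod q,
      (((univ \ ({0, -d} : Finset (ZMod q))).filter fun x => vv x = v).card : ℂ) * F v
        = (1 + χ q (v * (v - 4 * d))) * F v := by
    intro v
    rcases eq_or_ne v 0 with rfl | hv
    · rw [hF0, mul_zero, mul_zero]
    · rw [hcount v hv]
  have hD1 : ∑ v : ZMod q, F v = g := rfl
  have hterm : ∀ v : ZMod q, χ q (v * (v - 4 * d)) * F v
      = χ q (v - 4 * d) * ψ q v - (if v = 0 then χ q (0 - 4 * d) * ψ q 0 else 0) := by
    intro v
    rcases eq_or_ne v 0 with rfl | hv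
    · rw [if_pos rfl, zero_mul, χ_zero, zero_mul, sub_self]
    · rw [if_neg hv, sub_zero, hFx, map_mul]
      have hs := χ_sq hv
      linear_combination (χ q (v - 4 * d) * ψ q v) * hs
  have hsum2 : ∑ v : ZMod q, χ q (v - 4 * d) * ψ q v = ψ q (4 * d) * g := by
    rw [← Equiv.sum_comp (Equiv.addRight (4 * d)) (fun v => χ q (v - 4 * d) * ψ q v), hg,
      gaussSum, Finset.mul_sum]
    refine Finset.sum_congr rfl fun x _ => ?_
    simp only [Equiv.coe_addRight]
    rw [add_sub_cancel_right, AddChar.map_add_eq_mul]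
    ring
  have hneg4 : χ q (0 - 4 * d) = χ q (-d) := by
    have h44 : (0 : ZMod q) - 4 * d = -d * (2 * 2) := by ring
    rw [h44, map_mul, map_mul, χ_sq h2, mul_one]
  have hSig2 : ∑ v : ZMod q, χ q (v * (v - 4 * d)) * F v = ψ q (4 * d) * g - χ q (-d) := by
    rw [Finset.sum_congr rfl fun v _ => hterm v, Finset.sum_sub_distrib, hsum2,
      Fintype.sum_ite_eq' (0 : ZMod q) (fun _ => χ q (0 - 4 * d) * ψ q 0), hneg4,
      AddChar.map_zero_eq_one, mul_one]
  rw [hsplit, hpair, Finset.sum_congr rfl hstepA, ← Finset.mul_sum, hfib,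
    Finset.sum_congr rfl (fun v _ => hC v)]
  have hfin : ∑ v : ZMod q, (1 + χ q (v * (v - 4 * d))) * F v
      = g + (ψ q (4 * d) * g - χ q (-d)) := by
    rw [Finset.sum_congr rfl (fun v _ => by rw [add_mul, one_mul] :
        ∀ v ∈ univ, (1 + χ q (v * (v - 4 * d))) * F v = F v + χ q (v * (v - 4 * d)) * F v),
      Finset.sum_add_distrib, hD1, hSig2]
  rw [hfin]
  have hψ : ψ q (-(2 * d)) * ψ q (4 * d) = ψ q (2 * d) := by
    rw [← AddChar.map_add_eq_mul]
    congr 1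
    ring
  linear_combination g * hψ

lemma S_bound (hodd : Odd q) (a b : ZMod q) :
    ‖S q a b‖ ≤ 2 * Real.sqrt q := by
  have hs : (0:ℝ) ≤ Real.sqrt q := Real.sqrt_nonneg q
  have hgabs := abs_gauss hodd
  rcases eq_or_ne a 0 with rfl | ha
  · rcases eq_or_ne b 0 with rfl | hb
    · rw [S_zero_zero hodd, norm_zero]
      positivity
    · rw [S_swap, S_reduce hb, mul_zero, norm_mul, S_one_zero, hgabs, χ_abs hb, one_mul]
      nlinarith
  · rcases eq_or_ne (a * b) 0 with hab | hab
    · have hb : b = 0 := by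
        rcases mul_eq_zero.mp hab with h | h
        · exact absurd h ha
        · exact h
      subst hb
      rw [S_reduce ha, mul_zero, norm_mul, S_one_zero, hgabs, χ_abs ha, one_mul]
      nlinarith
    · rw [S_reduce ha, norm_mul, χ_abs ha, one_mul]
      by_cases hsq : IsSquare (a * b)
      · obtain ⟨d, hd⟩ := hsq
        have hdne : d ≠ 0 := by
          rintro rfl
          rw [mul_zero] at hd
          exact hab hd
        rw [hd, S_one_square hodd hdne, norm_mul, hgabs]
        have hle : ‖ψ q (2 * d) + ψ q (-(2 * d))‖ ≤ 2 := by
          calc ‖ψ q (2 * d) + ψ q (-(2 * d))‖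
              ≤ ‖ψ q (2 * d)‖ + ‖ψ q (-(2 * d))‖ :=
            norm_add_le _ _
          _ = 2 := by rw [ψ_abs, ψ_abs]; norm_num
        nlinarith [norm_nonneg (ψ q (2 * d) + ψ q (-(2 * d)))]
      · have hχ : χ q (a * b) = -1 := by
          rw [χ_apply, quadraticChar_neg_one_iff_not_isSquare.mpr hsq]
          norm_num
        have h0 : S q 1 (a * b) = 0 := by
          have hss := S_one_self hab
          rw [hχ] at hss
          linear_combination (1/2 : ℂ) * hss
        rw [h0, norm_zero]
        positivity

lemma e_int (n : ℤ) : e ((n : ℝ) / q) = ψ q ((n : ZMod q)) := by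
  rw [ψ, ZMod.stdAddChar_coe, e]
  congr 1
  push_cast
  ring

lemma sum_units (f : ZMod q → ℂ) (h0 : f 0 = 0) :
    ∑ k : (ZMod q)ˣ, f (k : ZMod q) = ∑ x : ZMod q, f x := by
  classical
  rw [eq_comm, ← Finset.sum_subset
    (Finset.subset_univ (Finset.univ.image (fun k : (ZMod q)ˣ => (k : ZMod q))))]
  · rw [Finset.sum_image]
    intro x _ y _ h
    exact Units.ext h
  · intro x _ hx
    rcases eq_or_ne x 0 with rfl | hne
    · exact h0
    · exact absurd (Finset.mem_image.mpr ⟨(Ne.isUnit hne).unit, Finset.mem_univ _,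
        (Ne.isUnit hne).unit_spec⟩) hx

end Salie

/-- Salié sum bound: for an odd prime `q` and integers `a, b`,
`|K₂(a,b,q)| ≤ 2√q`, where
`K₂(a,b,q) = ∑_{k ∈ (ℤ/q)ˣ} (k/q) e(ka/q + k*b/q)`. -/
theorem salie_sum_bound (q : ℕ) [Fact q.Prime] (hodd : Odd q) (a b : ℤ) :
    ‖∑ k : (ZMod q)ˣ,
      (legendreSym q ((k : ZMod q).val : ℤ) : ℂ) *
        e ((((k : ZMod q).val : ℝ) * a + ((((k⁻¹ : (ZMod q)ˣ) : ZMod q)).val : ℝ) * b) / q)‖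
      ≤ 2 * Real.sqrt q := by
  have hvaln : ∀ x : ZMod q, ((x.val : ℕ) : ZMod q) = x := fun x =>
    ZMod.natCast_rightInverse x
  have hval : ∀ x : ZMod q, ((x.val : ℤ) : ZMod q) = x := fun x => by
    push_cast
    exact hvaln x
  have hterm : ∀ k : (ZMod q)ˣ,
      (legendreSym q ((k : ZMod q).val : ℤ) : ℂ) *
        e ((((k : ZMod q).val : ℝ) * a + ((((k⁻¹ : (ZMod q)ˣ) : ZMod q)).val : ℝ) * b) / q)
      = Salie.χ q (k : ZMod q) *
          Salie.ψ q ((a : ZMod q) * (k : ZMod q) + (b : ZMod q) * ((k : ZMod q))⁻¹) := by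
    intro k
    congr 1
    · rw [legendreSym, Salie.χ_apply, hval]
    · have h1 : ((((k : ZMod q).val : ℝ) * a + ((((k⁻¹ : (ZMod q)ˣ) : ZMod q)).val : ℝ) * b) / q)
          = ((((k : ZMod q).val * a + (((k⁻¹ : (ZMod q)ˣ) : ZMod q)).val * b : ℤ)) : ℝ) / q := by
        push_cast
        ring
      rw [h1, Salie.e_int]
      congr 1
      push_cast
      rw [hvaln, hvaln]
      ring
  have hsum : (∑ k : (ZMod q)ˣ,
      (legendreSym q ((k : ZMod q).val : ℤ) : ℂ) *
        e ((((k : ZMod q).val : ℝ) * a + ((((k⁻¹ : (ZMod q)ˣ) : ZMod q)).val : ℝ) * b) / q))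
      = Salie.S q (a : ZMod q) (b : ZMod q) :=
    (Finset.sum_congr rfl fun k _ => hterm k).trans
      (Salie.sum_units (fun x => Salie.χ q x * Salie.ψ q ((a : ZMod q) * x + (b : ZMod q) * x⁻¹))
        (by simp only [Salie.χ_zero, zero_mul]))
  rw [hsum]
  exact Salie.S_bound hodd _ _
end

section
/- Let η : ℝ → [0,1] be a Schwartz function supported in [−1,1] with ∫η = 1, Q ≥ 2, A_Q a set of primes in [Q, 2Q], F_Q = {a/q : q ∈ A_Q, 1 ≤ a ≤ q−1}, N_Q = |F_Q| = ∑_{q∈A_Q}(q−1), c_Q = 10Q²∫η / N_Q, and η_Q(t) = c_Q ∑_{a/q ∈ F_Q} η((t − a/q)·10Q²), viewed as a function on 𝕋. Then for every nonzero integer l, the Fourier coefficient satisfies 𝔉(1 − η_Q)(l) = −c_Q (10Q²)^{−1} η̂(l/(10Q²)) · (∑_{q ∈ A_Q, q | l} q − |A_Q|), and 𝔉(1 − η_Q)(0) = 0. -/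
open MeasureTheory

lemma e_add (x y : ℝ) : e (x + y) = e x * e y := by
  simp [e, ← Complex.exp_add]; ring_nf

lemma e_cont : Continuous e :=
  Complex.continuous_exp.comp (continuous_const.mul Complex.continuous_ofReal)

lemma e_int (n : ℤ) : e n = 1 := by
  rw [e, ← Complex.exp_int_mul_two_pi_mul_I n]
  congr 1; push_cast; ring

lemma e_nat_pow (x : ℝ) (n : ℕ) : e (n * x) = (e x) ^ n := by
  rw [e, e, ← Complex.exp_nat_mul]
  congr 1; push_cast; ring

lemma geom_sum_lemma (q : ℕ) (hq : 1 ≤ q) (l : ℤ) :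
    ∑ a ∈ Finset.Icc 1 (q - 1), e (-(l : ℝ) * ((a : ℝ) / q)) =
      (if (q : ℤ) ∣ l then (q : ℂ) else 0) - 1 := by
  have hq0 : (q : ℝ) ≠ 0 := by positivity
  have hIcc : Finset.Icc 1 (q - 1) = (Finset.range q).erase 0 := by
    ext a; simp only [Finset.mem_Icc, Finset.mem_erase, Finset.mem_range]; omega
  have hterm : ∀ a : ℕ, e (-(l : ℝ) * ((a : ℝ) / q)) = (e (-(l : ℝ) / q)) ^ a := by
    intro a
    rw [← e_nat_pow]
    congr 1; ring
  have h0 : (0 : ℕ) ∈ Finset.range q := Finset.mem_range.mpr (by omega)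
  rw [hIcc, Finset.sum_erase_eq_sub h0]
  have hzero : e (-(l : ℝ) * (((0:ℕ) : ℝ) / q)) = 1 := by
    norm_num [e]
  have hrange : ∑ a ∈ Finset.range q, e (-(l : ℝ) * ((a : ℝ) / q)) =
      (if (q : ℤ) ∣ l then (q : ℂ) else 0) := by
    simp only [hterm]
    by_cases hdvd : (q : ℤ) ∣ l
    · obtain ⟨m, hm⟩ := id hdvd
      have hm2 : (-(l : ℝ) / q) = ((-m : ℤ) : ℝ) := by
        rw [hm]; push_cast; field_simp
      rw [if_pos hdvd]
      simp only [hm2, e_int, one_pow, Finset.sum_const, Finset.card_range, nsmul_eq_mul, mul_one]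
    · have hζ : e (-(l : ℝ) / q) ≠ 1 := by
        intro h
        rw [e, Complex.exp_eq_one_iff] at h
        obtain ⟨n, hn⟩ := h
        have hne : (2 * (Real.pi : ℂ) * Complex.I) ≠ 0 := by
          simp [Complex.ofReal_ne_zero, Real.pi_ne_zero, Complex.I_ne_zero]
        have h2 : ((-(l : ℝ) / q : ℝ) : ℂ) = (n : ℂ) := by
          apply mul_left_cancel₀ hne
          rw [hn]; ring
        have h3 : -(l : ℝ) / q = (n : ℝ) := by exact_mod_cast h2
        have h4 : -(l : ℝ) = (n : ℝ) * q := by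
          field_simp at h3; linarith
        have h5 : -l = n * (q : ℤ) := by exact_mod_cast h4
        exact hdvd ⟨-n, by linarith⟩
      rw [geom_sum_eq hζ]
      have hpow : (e (-(l : ℝ) / q)) ^ q = 1 := by
        rw [← e_nat_pow]
        have h6 : (q : ℝ) * (-(l : ℝ) / q) = ((-l : ℤ) : ℝ) := by
          push_cast; field_simp
        rw [h6, e_int]
      simp [hpow, hdvd]
  rw [hzero, hrange]

lemma bump_integral (η : ℝ → ℝ)
    (hsupp : ∀ y : ℝ, y ∉ Set.Icc (-1 : ℝ) 1 → η y = 0)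
    (M : ℝ) (hM : 0 < M) (α : ℝ) (h1 : 1 / M < α) (h2 : α + 1 / M ≤ 1) (l : ℤ) :
    ∫ t in (0:ℝ)..1, (η ((t - α) * M) : ℂ) * e (-(l : ℝ) * t)
      = (1 / M : ℂ) * e (-(l : ℝ) * α) * ∫ y : ℝ, (η y : ℂ) * e (-((l : ℝ) / M) * y) := by
  set F : ℝ → ℂ := fun t => (η ((t - α) * M) : ℂ) * e (-(l : ℝ) * t) with hF_def
  have hMne : M ≠ 0 := ne_of_gt hM
  have h_vanish : ∀ t : ℝ, t ∉ Set.Ioc (0:ℝ) 1 → F t = 0 := by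
    intro t ht
    simp only [Set.mem_Ioc, not_and_or, not_lt, not_le] at ht
    have hout : (t - α) * M ∉ Set.Icc (-1:ℝ) 1 := by
      have hαM : 1 < α * M := by
        have := (div_lt_iff₀ hM).mp h1
        linarith [this]
      rcases ht with h | h
      · intro hc
        have : (t - α) * M ≤ -α * M := by nlinarith
        have h1M : α + 1/M ≤ 1 := h2
        simp only [Set.mem_Icc] at hc
        nlinarith [hc.1]
      · intro hc
        simp only [Set.mem_Icc] at hc
        have hαle : α ≤ 1 - 1/M := by linarith
        have : (t - α) * M > (1/M) * M := by
          apply mul_lt_mul_of_pos_right _ hM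
          linarith
        rw [one_div_mul_cancel hMne] at this
        linarith [hc.2]
    simp [hF_def, hsupp _ hout]
  rw [intervalIntegral.integral_of_le zero_le_one,
    setIntegral_eq_integral_of_forall_compl_eq_zero h_vanish,
    ← MeasureTheory.integral_add_left_eq_self F α]
  have hF2 : ∀ y : ℝ, F (α + y) =
      e (-(l : ℝ) * α) * ((η (y * M) : ℂ) * e (-(l : ℝ) * y)) := by
    intro y
    simp only [hF_def]
    rw [show α + y - α = y by ring,
      show -(l:ℝ) * (α + y) = -(l:ℝ) * α + -(l:ℝ) * y by ring, e_add]
    ring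
  simp_rw [hF2]
  rw [MeasureTheory.integral_const_mul]
  set G : ℝ → ℂ := fun x => (η x : ℂ) * e (-((l : ℝ) / M) * x) with hG_def
  have hG2 : ∀ y : ℝ, (η (y * M) : ℂ) * e (-(l : ℝ) * y) = G (y * M) := by
    intro y
    simp only [hG_def]
    congr 2
    field_simp
  simp_rw [hG2]
  rw [MeasureTheory.Measure.integral_comp_mul_right G M]
  rw [abs_of_pos (inv_pos.mpr hM)]
  rw [Complex.real_smul]
  push_cast
  ring
/-- Fourier coefficients of `1 − η_Q`, where `η_Q` is the normalized sum of
bumps `η((t − a/q)·10Q²)` at the Farey fractions `a/q`, `q` prime in `[Q,2Q]`: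
for `l ≠ 0`,
`𝔉(1 − η_Q)(l) = −c_Q (10Q²)^{−1} η̂(l/(10Q²)) (∑_{q ∈ A_Q, q ∣ l} q − |A_Q|)`,
and `𝔉(1 − η_Q)(0) = 0`. -/
theorem fourier_coeff_etaQ (Q : ℕ) (hQ : 2 ≤ Q)
    (η : ℝ → ℝ) (hηc : Continuous η)
    (hη0 : ∀ y, 0 ≤ η y) (hη1 : ∀ y, η y ≤ 1)
    (hsupp : ∀ y : ℝ, y ∉ Set.Icc (-1 : ℝ) 1 → η y = 0)
    (hint : ∫ y : ℝ, η y = 1)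
    (A_Q : Finset ℕ) (hA : ∀ q ∈ A_Q, q.Prime ∧ Q ≤ q ∧ q ≤ 2 * Q)
    (hAne : A_Q.Nonempty)
    (N_Q : ℕ) (hN : N_Q = ∑ q ∈ A_Q, (q - 1))
    (c_Q : ℝ) (hc : c_Q = 10 * (Q : ℝ) ^ 2 / N_Q)
    (η_Q : ℝ → ℝ)
    (hηQ : ∀ t : ℝ, η_Q t =
      c_Q * ∑ q ∈ A_Q, ∑ a ∈ Finset.Icc 1 (q - 1), η ((t - (a : ℝ) / q) * (10 * Q ^ 2))) :
    (∀ l : ℤ, l ≠ 0 →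
      ∫ t in (0:ℝ)..1, ((1 : ℂ) - η_Q t) * e (-(l : ℝ) * t) =
        -(c_Q / (10 * Q ^ 2) : ℂ) * (∫ y : ℝ, (η y : ℂ) * e (-((l : ℝ) / (10 * Q ^ 2)) * y)) *
          (((∑ q ∈ A_Q.filter (fun q : ℕ => (q : ℤ) ∣ l), q : ℕ) : ℂ) - (A_Q.card : ℂ))) ∧
    ∫ t in (0:ℝ)..1, ((1 : ℂ) - η_Q t) = 0 := by
  have hQ1 : (2:ℝ) ≤ (Q:ℝ) := by exact_mod_cast hQ
  have hM : (0:ℝ) < 10 * (Q:ℝ) ^ 2 := by positivity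
  have hηQ_cont : Continuous η_Q := by
    have hfe : η_Q = fun t => c_Q * ∑ q ∈ A_Q, ∑ a ∈ Finset.Icc 1 (q - 1),
        η ((t - (a : ℝ) / q) * (10 * Q ^ 2)) := funext hηQ
    rw [hfe]
    refine continuous_const.mul (continuous_finset_sum _ fun q _ =>
      continuous_finset_sum _ fun a _ => hηc.comp ?_)
    exact (continuous_id.sub continuous_const).mul continuous_const
  have hc1 : ∀ (β : ℝ) (l : ℤ), Continuous fun t : ℝ =>
      (η ((t - β) * (10 * (Q:ℝ) ^ 2)) : ℂ) * e (-(l:ℝ) * t) := by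
    intro β l
    exact (Complex.continuous_ofReal.comp (hηc.comp
      ((continuous_id.sub continuous_const).mul continuous_const))).mul
      (e_cont.comp (continuous_const.mul continuous_id))
  have e_zero : e 0 = 1 := by simp [e]
  -- main computation, any l
  have main : ∀ l : ℤ,
      ∫ t in (0:ℝ)..1, (η_Q t : ℂ) * e (-(l : ℝ) * t) =
        (c_Q : ℂ) / (10 * (Q:ℝ) ^ 2) *
          (∫ y : ℝ, (η y : ℂ) * e (-((l : ℝ) / (10 * (Q:ℝ) ^ 2)) * y)) *
          ∑ q ∈ A_Q, ((if (q : ℤ) ∣ l then (q : ℂ) else 0) - 1) := by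
    intro l
    have hstep1 : ∀ t : ℝ, (η_Q t : ℂ) * e (-(l:ℝ) * t) =
        ∑ q ∈ A_Q, ∑ a ∈ Finset.Icc 1 (q-1),
          (c_Q:ℂ) * ((η ((t - (a:ℝ)/q) * (10 * (Q:ℝ) ^ 2)) : ℂ) * e (-(l:ℝ) * t)) := by
      intro t
      rw [hηQ t]
      push_cast
      simp_rw [Finset.mul_sum, Finset.sum_mul, mul_assoc]
    simp_rw [hstep1]
    rw [intervalIntegral.integral_finset_sum (f := fun (q : ℕ) (t : ℝ) => ∑ a ∈ Finset.Icc 1 (q-1),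
        (c_Q:ℂ) * ((η ((t - ((a:ℕ):ℝ)/q) * (10 * (Q:ℝ) ^ 2)) : ℂ) * e (-(l:ℝ) * t))) (fun q hq =>
      (continuous_finset_sum _ fun a _ =>
        continuous_const.mul (hc1 _ l)).intervalIntegrable 0 1)]
    have hper : ∀ q ∈ A_Q,
        (∑ a ∈ Finset.Icc 1 (q-1), ∫ t in (0:ℝ)..1,
          (c_Q:ℂ) * ((η ((t - (a:ℝ)/q) * (10 * (Q:ℝ) ^ 2)) : ℂ) * e (-(l:ℝ) * t))) =
        ((c_Q : ℂ) / (10 * (Q:ℝ) ^ 2) *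
          (∫ y : ℝ, (η y : ℂ) * e (-((l : ℝ) / (10 * (Q:ℝ) ^ 2)) * y))) *
          ((if (q : ℤ) ∣ l then (q : ℂ) else 0) - 1) := by
      intro q hq
      obtain ⟨hqp, hqQ, hq2Q⟩ := hA q hq
      have hq1 : 1 ≤ q := hqp.one_lt.le
      have hq0 : (0:ℝ) < q := by exact_mod_cast hqp.pos
      have hqM : (q:ℝ) < 10 * (Q:ℝ) ^ 2 := by
        have : (q:ℝ) ≤ 2 * Q := by exact_mod_cast hq2Q
        nlinarith
      have hterm : ∀ a ∈ Finset.Icc 1 (q-1),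
          (∫ t in (0:ℝ)..1,
            (c_Q:ℂ) * ((η ((t - (a:ℝ)/q) * (10 * (Q:ℝ) ^ 2)) : ℂ) * e (-(l:ℝ) * t))) =
          ((c_Q : ℂ) / (10 * (Q:ℝ) ^ 2) *
            (∫ y : ℝ, (η y : ℂ) * e (-((l : ℝ) / (10 * (Q:ℝ) ^ 2)) * y))) *
            e (-(l:ℝ) * ((a:ℝ)/q)) := by
        intro a ha
        simp only [Finset.mem_Icc] at ha
        have ha1 : (1:ℝ) ≤ (a:ℝ) := by exact_mod_cast ha.1
        have haq : (a:ℝ) + 1 ≤ q := by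
          have : a + 1 ≤ q := by omega
          exact_mod_cast this
        have hb1 : 1 / (10 * (Q:ℝ) ^ 2) < (a:ℝ)/q := by
          have h1q : 1 / (10 * (Q:ℝ) ^ 2) < 1 / q := by
            apply one_div_lt_one_div_of_lt hq0 hqM
          have : 1 / (q:ℝ) ≤ (a:ℝ)/q := by gcongr
          linarith
        have hb2 : (a:ℝ)/q + 1 / (10 * (Q:ℝ) ^ 2) ≤ 1 := by
          have h1 : 1 / (10 * (Q:ℝ) ^ 2) ≤ 1 / q := by
            apply one_div_le_one_div_of_le hq0 hqM.le
          have h2 : (a:ℝ)/q + 1/q ≤ 1 := by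
            rw [← add_div, div_le_one hq0]
            linarith
          linarith
        rw [intervalIntegral.integral_const_mul,
          bump_integral η hsupp _ hM _ hb1 hb2 l]
        push_cast
        ring
      rw [Finset.sum_congr rfl hterm, ← Finset.mul_sum, geom_sum_lemma q hq1 l]
    have hq2 : ∀ q ∈ A_Q, (∫ t in (0:ℝ)..1, ∑ a ∈ Finset.Icc 1 (q-1),
        (c_Q:ℂ) * ((η ((t - (a:ℝ)/q) * (10 * (Q:ℝ) ^ 2)) : ℂ) * e (-(l:ℝ) * t))) =
        ∑ a ∈ Finset.Icc 1 (q-1), ∫ t in (0:ℝ)..1,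
          (c_Q:ℂ) * ((η ((t - (a:ℝ)/q) * (10 * (Q:ℝ) ^ 2)) : ℂ) * e (-(l:ℝ) * t)) :=
      by
      intro q hq
      exact intervalIntegral.integral_finset_sum
        (fun a _ => (continuous_const.mul (hc1 _ l)).intervalIntegrable 0 1)
    rw [Finset.sum_congr rfl (fun q hq => (hq2 q hq).trans (hper q hq)), ← Finset.mul_sum]
  constructor
  · intro l hl
    have hsplit : ∫ t in (0:ℝ)..1, ((1 : ℂ) - η_Q t) * e (-(l : ℝ) * t) =
        (∫ t in (0:ℝ)..1, e (-(l : ℝ) * t)) -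
          ∫ t in (0:ℝ)..1, (η_Q t : ℂ) * e (-(l : ℝ) * t) := by
      have hec : Continuous fun t : ℝ => e (-(l:ℝ) * t) := by
        exact e_cont.comp (continuous_const.mul continuous_id)
      have hqc : Continuous fun t : ℝ => (η_Q t : ℂ) * e (-(l:ℝ) * t) := by
        exact (Complex.continuous_ofReal.comp hηQ_cont).mul hec
      simp_rw [sub_mul, one_mul]
      rw [intervalIntegral.integral_sub (hec.intervalIntegrable 0 1)
        (hqc.intervalIntegrable 0 1)]
    have hexp : ∫ t in (0:ℝ)..1, e (-(l:ℝ)*t) = 0 := by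
      have hc0 : (2*(Real.pi:ℂ)*Complex.I*(-(l:ℂ))) ≠ 0 := by
        simp [Real.pi_ne_zero, Complex.I_ne_zero, Complex.ofReal_ne_zero, hl]
      have he : ∀ t:ℝ, e (-(l:ℝ)*t) =
          Complex.exp ((2*(Real.pi:ℂ)*Complex.I*(-(l:ℂ))) * t) := by
        intro t; rw [e]; congr 1; push_cast; ring
      simp_rw [he]
      rw [integral_exp_mul_complex hc0]
      have h1 : (2*(Real.pi:ℂ)*Complex.I*(-(l:ℂ))) * ((1:ℝ):ℂ) =
          ((-l : ℤ) : ℂ) * (2*Real.pi*Complex.I) := by push_cast; ring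
      rw [h1, Complex.exp_int_mul_two_pi_mul_I]
      simp
    have hsum : ∑ q ∈ A_Q, ((if (q:ℤ) ∣ l then (q:ℂ) else 0) - 1)
        = ((∑ q ∈ A_Q.filter (fun q : ℕ => (q:ℤ) ∣ l), q : ℕ) : ℂ) - (A_Q.card : ℂ) := by
      rw [Finset.sum_sub_distrib]
      congr 1
      · rw [Nat.cast_sum, Finset.sum_filter]
      · simp
    rw [hsplit, hexp, main l, hsum]
    push_cast
    ring
  · -- l = 0 case
    have hN_pos : 0 < N_Q := by
      obtain ⟨q0, hq0⟩ := hAne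
      have h2 : 2 ≤ q0 := (hA q0 hq0).1.two_le
      have hle : q0 - 1 ≤ ∑ q ∈ A_Q, (q - 1) :=
        by exact Finset.single_le_sum (f := fun q => q - 1) (fun i _ => Nat.zero_le _) hq0
      omega
    have hNne : ((N_Q:ℝ)) ≠ 0 := by positivity
    have h00 := main 0
    simp only [Int.cast_zero, neg_zero, zero_mul, zero_div, e_zero, mul_one,
      dvd_zero, if_true] at h00
    have hIone : (∫ y : ℝ, ((η y : ℝ) : ℂ)) = 1 := by
      have : (∫ y : ℝ, ((η y : ℝ) : ℂ)) = ((∫ y : ℝ, η y : ℝ) : ℂ) := integral_ofReal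
      rw [this, hint]; norm_num
    rw [hIone] at h00
    have hNsum : ∑ q ∈ A_Q, ((q:ℂ) - 1) = (N_Q:ℂ) := by
      rw [hN, Nat.cast_sum]
      refine (Finset.sum_congr rfl fun q hq => ?_).symm
      have h1q : 1 ≤ q := (hA q hq).1.one_lt.le
      push_cast [Nat.cast_sub h1q]
      ring
    rw [hNsum] at h00
    have hsplit0 : ∫ t in (0:ℝ)..1, ((1 : ℂ) - η_Q t) =
        (∫ t in (0:ℝ)..1, (1:ℂ)) - ∫ t in (0:ℝ)..1, (η_Q t : ℂ) := by
      have hqc : Continuous fun t : ℝ => (η_Q t : ℂ) := by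
        exact Complex.continuous_ofReal.comp hηQ_cont
      rw [intervalIntegral.integral_sub (intervalIntegrable_const)
        (hqc.intervalIntegrable 0 1)]
    rw [hsplit0, h00]
    have hcN : (c_Q:ℂ) / (10 * (Q:ℝ) ^ 2) * (1:ℂ) * (N_Q:ℂ) = 1 := by
      have hr : c_Q / (10 * (Q:ℝ) ^ 2) * 1 * (N_Q:ℝ) = 1 := by
        rw [hc]; field_simp
      calc (c_Q:ℂ) / (10 * (Q:ℝ) ^ 2) * (1:ℂ) * (N_Q:ℂ)
          = ((c_Q / (10 * (Q:ℝ) ^ 2) * 1 * (N_Q:ℝ) : ℝ) : ℂ) := by push_cast; ring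
        _ = 1 := by rw [hr]; norm_num
    rw [hcN]
    simp
end
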